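/- arXiv:1707.04106 — 5 statements merged into one kernel-verified Lean document; each statement's English description precedes it below -/
import Mathlib

section
/- Soundness for recall strategies: for every formula φ ∈ Φ, if ⊢ φ (φ is derivable from propositional tautologies and Armstrong's axioms by Modus Ponens), then T ⊨ φ for every transition system T under the recall semantics. -/
namespace Nav

noncomputable section

attribute [local instance] Classical.propDecidable

/-- A transition system over a set of views `V` (Definition 2 of the paper):
a set of states `S`, an indistinguishability equivalence relation `sim` on `S`,
a map `star` from views to equivalence classes of states, a nonempty set of
instructions `I`, and for each instruction a transition map into nonempty sets
of states. -/
structure TransitionSystem (V : Type) where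
  S : Type
  sim : Setoid S
  star : V → Quotient sim
  I : Type
  instNonempty : Nonempty I
  Δ : I → S → Set S
  Δ_nonempty : ∀ i w, (Δ i w).Nonempty

variable {V : Type}

namespace TransitionSystem

/-- The equivalence class `[w]` of a state. -/
def cls (T : TransitionSystem V) (w : T.S) : Quotient T.sim := Quotient.mk T.sim w

/-- `A* = { a* | a ∈ A }`. -/
def starSet (T : TransitionSystem V) (A : Set V) : Set (Quotient T.sim) := T.star '' A

/-- A history `w₀,i₁,w₁,…,iₙ,wₙ`: the states are `w 0, …, w n` and the
instruction `iₖ` (for `1 ≤ k ≤ n`) is `i (k-1)`.  (Values of `w` above `n` and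
of `i` above `n-1` are irrelevant junk.) -/
structure History (T : TransitionSystem V) where
  n : ℕ
  w : ℕ → T.S
  i : ℕ → T.I
  valid : ∀ k < n, w (k + 1) ∈ T.Δ (i k) (w k)

variable {T : TransitionSystem V}

/-- Indistinguishability `≈` of histories: same length, same instruction
sequence, and state-wise indistinguishable states. -/
def History.Indist (h h' : History T) : Prop :=
  h.n = h'.n ∧ (∀ k < h.n, h.i k = h'.i k) ∧ ∀ k ≤ h.n, T.sim.r (h.w k) (h'.w k)

/-- `hd(h)`: the last state of a history. -/
def History.hd (h : History T) : T.S := h.w h.n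

/-- A recall strategy: a function from histories to instructions that is
constant on `≈`-equivalence classes of histories (i.e. a function on
histories modulo `≈`). -/
structure RecallStrategy (T : TransitionSystem V) where
  act : History T → T.I
  respects : ∀ h h' : History T, h.Indist h' → act h = act h'

/-- An infinite sequence `w₀,i₁,w₁,i₂,w₂,…`: states `w 0, w 1, …` and
instructions `i 0, i 1, …` where `i k` is the instruction `i_{k+1}` used to go
from `w k` to `w (k+1)`. -/
structure Path (T : TransitionSystem V) where
  w : ℕ → T.S
  i : ℕ → T.I

/-- Every finite prefix of the sequence is a history. -/
def Path.Valid (π : Path T) : Prop := ∀ k, π.w (k + 1) ∈ T.Δ (π.i k) (π.w k)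

/-- The prefix history `w₀,i₁,…,wₙ` of a valid infinite sequence. -/
def Path.prefixH (π : Path T) (hv : π.Valid) (n : ℕ) : History T :=
  ⟨n, π.w, π.i, fun k _ => hv k⟩

/-- `π` is a path under the recall strategy `s` (Definition 7): every finite
prefix is a history and each instruction is the one prescribed by `s` on the
preceding prefix history. -/
def IsPathUnder (s : RecallStrategy T) (π : Path T) : Prop :=
  ∃ hv : π.Valid, ∀ k, π.i k = s.act (π.prefixH hv k)

/-- `Path_s(A)`: the paths under `s` whose initial class is in `A*`. -/
def PathSet (s : RecallStrategy T) (A : Set V) : Set (Path T) :=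
  {π | IsPathUnder s π ∧ T.cls (π.w 0) ∈ T.starSet A}

/-- `Visit_s(B)`: the paths under `s` that visit a class in `B*`. -/
def VisitSet (s : RecallStrategy T) (B : Set V) : Set (Path T) :=
  {π | IsPathUnder s π ∧ ∃ k, T.cls (π.w k) ∈ T.starSet B}

/-- The number of initial states dropped by the truncation `h|_B`
(Definition 12): the least `k` such that either `k = n` or `[wₖ] ∈ B*`. -/
def History.truncIdx (h : History T) (B : Set V) : ℕ :=
  Nat.find (p := fun k => k = h.n ∨ T.cls (h.w k) ∈ T.starSet B) ⟨h.n, Or.inl rfl⟩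

/-- The truncation `h|_B` of a history (Definition 12): repeatedly drop the
first state while the length is positive and the first class is not in `B*`. -/
def History.trunc (h : History T) (B : Set V) : History T where
  n := h.n - h.truncIdx B
  w := fun k => h.w (h.truncIdx B + k)
  i := fun k => h.i (h.truncIdx B + k)
  valid := fun k hk => h.valid (h.truncIdx B + k) (by omega)

/-- The composition `s₁ ∘_B s₂` of recall strategies (Definition 13): follow
`s₁` while no state of the history has its class in `B*`; once such a state is
reached, follow `s₂` on the truncated history. -/
def RecallStrategy.compB (s1 s2 : RecallStrategy T) (B : Set V) : RecallStrategy T where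
  act := fun h =>
    if ∀ k ≤ h.n, T.cls (h.w k) ∉ T.starSet B then s1.act h
    else s2.act (h.trunc B)
  respects := by
    intro h h' hi
    obtain ⟨hn, hins, hsim⟩ := hi
    have hcls : ∀ k ≤ h.n, T.cls (h.w k) = T.cls (h'.w k) := fun k hk => Quot.sound (hsim k hk)
    have hcond : (∀ k ≤ h.n, T.cls (h.w k) ∉ T.starSet B) ↔
        (∀ k ≤ h'.n, T.cls (h'.w k) ∉ T.starSet B) := by
      constructor
      · intro hc k hk
        rw [← hcls k (by omega)]
        exact hc k (by omega)
      · intro hc k hk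
        rw [hcls k hk]
        exact hc k (by omega)
    have d1 : h.truncIdx B ≤ h.n := Nat.find_le (Or.inl rfl)
    have d2 : h'.truncIdx B ≤ h'.n := Nat.find_le (Or.inl rfl)
    have p1 : h.truncIdx B = h.n ∨ T.cls (h.w (h.truncIdx B)) ∈ T.starSet B :=
      Nat.find_spec (p := fun k => k = h.n ∨ T.cls (h.w k) ∈ T.starSet B) ⟨h.n, Or.inl rfl⟩
    have p2 : h'.truncIdx B = h'.n ∨ T.cls (h'.w (h'.truncIdx B)) ∈ T.starSet B :=
      Nat.find_spec (p := fun k => k = h'.n ∨ T.cls (h'.w k) ∈ T.starSet B) ⟨h'.n, Or.inl rfl⟩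
    have hidx : h.truncIdx B = h'.truncIdx B := by
      have le1 : h'.truncIdx B ≤ h.truncIdx B := by
        apply Nat.find_le
        rcases p1 with e | hb
        · exact Or.inl (by omega)
        · exact Or.inr (by rw [← hcls _ d1]; exact hb)
      have le2 : h.truncIdx B ≤ h'.truncIdx B := by
        apply Nat.find_le
        rcases p2 with e | hb
        · exact Or.inl (by omega)
        · exact Or.inr (by rw [hcls _ (by omega)]; exact hb)
      omega
    show (if ∀ k ≤ h.n, T.cls (h.w k) ∉ T.starSet B then s1.act h else s2.act (h.trunc B)) =
        (if ∀ k ≤ h'.n, T.cls (h'.w k) ∉ T.starSet B then s1.act h' else s2.act (h'.trunc B))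
    by_cases hc : ∀ k ≤ h.n, T.cls (h.w k) ∉ T.starSet B
    · rw [if_pos hc, if_pos (hcond.mp hc)]
      exact s1.respects h h' ⟨hn, hins, hsim⟩
    · rw [if_neg hc, if_neg (fun hc' => hc (hcond.mpr hc'))]
      apply s2.respects
      refine ⟨?_, ?_, ?_⟩
      · show h.n - h.truncIdx B = h'.n - h'.truncIdx B
        omega
      · intro k hk
        have hk' : k < h.n - h.truncIdx B := hk
        show h.i (h.truncIdx B + k) = h'.i (h'.truncIdx B + k)
        rw [← hidx]
        exact hins _ (by omega)
      · intro k hk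
        have hk' : k ≤ h.n - h.truncIdx B := hk
        show T.sim.r (h.w (h.truncIdx B + k)) (h'.w (h'.truncIdx B + k))
        rw [← hidx]
        exact hsim _ (by omega)

/-- The truncation `π|_B` of a path (Definition 15): drop initial states until
the first one whose class is in `B*` (if no such state exists the truncation is
left undefined by the paper; we take it to be `π` itself). -/
def Path.trunc (π : Path T) (B : Set V) : Path T :=
  if H : ∃ k, T.cls (π.w k) ∈ T.starSet B then
    ⟨fun k => π.w (Nat.find H + k), fun k => π.i (Nat.find H + k)⟩
  else π

/-- `π` is a path under a memoryless strategy `s : S/∼ → I` (Definition 6). -/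
def IsPathUnderM (s : Quotient T.sim → T.I) (π : Path T) : Prop :=
  π.Valid ∧ ∀ k, π.i k = s (T.cls (π.w k))

/-- `Path_s(A)` for a memoryless strategy. -/
def PathSetM (s : Quotient T.sim → T.I) (A : Set V) : Set (Path T) :=
  {π | IsPathUnderM s π ∧ T.cls (π.w 0) ∈ T.starSet A}

/-- `Visit_s(B)` for a memoryless strategy. -/
def VisitSetM (s : Quotient T.sim → T.I) (B : Set V) : Set (Path T) :=
  {π | IsPathUnderM s π ∧ ∃ k, T.cls (π.w k) ∈ T.starSet B}

end TransitionSystem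

open TransitionSystem

/-- The language Φ: atomic formulae `A ▷ B` for nonempty `A, B ⊆ V`, closed
under negation and implication (Definition 1). -/
inductive Formula (V : Type) : Type
  | nav : (A B : Set V) → A.Nonempty → B.Nonempty → Formula V
  | neg : Formula V → Formula V
  | imp : Formula V → Formula V → Formula V

/-- Classical evaluation of a formula under a truth assignment to the atoms. -/
def Formula.evalWith (v : Set V → Set V → Prop) : Formula V → Prop
  | .nav A B _ _ => v A B
  | .neg φ => ¬ φ.evalWith v
  | .imp φ ψ => φ.evalWith v → ψ.evalWith v

/-- Propositional tautologies of the language Φ. -/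
def Formula.Tautology (φ : Formula V) : Prop := ∀ v, φ.evalWith v

/-- Derivability `X ⊢ φ` from propositional tautologies and Armstrong's axioms
(Reflexivity, Augmentation, Transitivity) using Modus Ponens, with the
formulae of `X` as additional axioms.  Plain `⊢ φ` is `ArmDeriv ∅ φ`. -/
inductive ArmDeriv (X : Set (Formula V)) : Formula V → Prop
  | hyp {φ : Formula V} : φ ∈ X → ArmDeriv X φ
  | taut {φ : Formula V} : φ.Tautology → ArmDeriv X φ
  | refl {A B : Set V} (hA : A.Nonempty) (hB : B.Nonempty) :
      A ⊆ B → ArmDeriv X (.nav A B hA hB)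
  | aug {A B C : Set V} (hA : A.Nonempty) (hB : B.Nonempty) (hC : C.Nonempty) :
      ArmDeriv X (.imp (.nav A B hA hB) (.nav (A ∪ C) (B ∪ C) hA.inl hB.inl))
  | trans {A B C : Set V} (hA : A.Nonempty) (hB : B.Nonempty) (hC : C.Nonempty) :
      ArmDeriv X (.imp (.nav A B hA hB) (.imp (.nav B C hB hC) (.nav A C hA hC)))
  | mp {φ ψ : Formula V} : ArmDeriv X (.imp φ ψ) → ArmDeriv X φ → ArmDeriv X ψ

/-- Derivability in the memoryless proof system: propositional tautologies,
Reflexivity, Augmentation, Monotonicity, and Modus Ponens. -/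
inductive MemDeriv (X : Set (Formula V)) : Formula V → Prop
  | hyp {φ : Formula V} : φ ∈ X → MemDeriv X φ
  | taut {φ : Formula V} : φ.Tautology → MemDeriv X φ
  | refl {A B : Set V} (hA : A.Nonempty) (hB : B.Nonempty) :
      A ⊆ B → MemDeriv X (.nav A B hA hB)
  | aug {A B C : Set V} (hA : A.Nonempty) (hB : B.Nonempty) (hC : C.Nonempty) :
      MemDeriv X (.imp (.nav A B hA hB) (.nav (A ∪ C) (B ∪ C) hA.inl hB.inl))
  | mono {A A' B : Set V} (hA : A.Nonempty) (hA' : A'.Nonempty) (hB : B.Nonempty) :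
      A ⊆ A' → MemDeriv X (.imp (.nav A' B hA' hB) (.nav A B hA hB))
  | mp {φ ψ : Formula V} : MemDeriv X (.imp φ ψ) → MemDeriv X φ → MemDeriv X ψ

/-- Satisfaction `T ⊨ φ` under the recall semantics (Definition 10):
`T ⊨ A ▷ B` iff `Path_s(A) ⊆ Visit_s(B)` for some recall strategy `s`. -/
def Sat (T : TransitionSystem V) : Formula V → Prop
  | .nav A B _ _ => ∃ s : RecallStrategy T, PathSet s A ⊆ VisitSet s B
  | .neg φ => ¬ Sat T φ
  | .imp φ ψ => Sat T φ → Sat T ψ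

/-- Satisfaction `T ⊨ φ` under the memoryless semantics (Definition 18). -/
def SatM (T : TransitionSystem V) : Formula V → Prop
  | .nav A B _ _ => ∃ s : Quotient T.sim → T.I, PathSetM s A ⊆ VisitSetM s B
  | .neg φ => ¬ SatM T φ
  | .imp φ ψ => SatM T φ → SatM T ψ

/-- `X` is consistent: no formula is derivable together with its negation. -/
def Consistent (X : Set (Formula V)) : Prop :=
  ¬ ∃ φ : Formula V, ArmDeriv X φ ∧ ArmDeriv X (.neg φ)

/-- `X` is a maximal consistent set of formulae. -/
def MaxConsistent (X : Set (Formula V)) : Prop :=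
  Consistent X ∧ ∀ φ : Formula V, φ ∈ X ∨ Formula.neg φ ∈ X

/-- The instruction set `I = {(A,B) | A ▷ B ∈ X}` of the canonical transition
system (Definition 21). -/
def CanonI (X : Set (Formula V)) : Type :=
  {p : Set V × Set V // ∃ (hA : p.1.Nonempty) (hB : p.2.Nonempty), Formula.nav p.1 p.2 hA hB ∈ X}

/-- Transitions of the canonical system (Definition 22): `Δ_{(A,B)}(w) = B` if
`w ∈ A` and `{⟲}` otherwise; the black hole `⟲` is `Sum.inr ()`. -/
def CanonΔ (X : Set (Formula V)) (i : CanonI X) : V ⊕ Unit → Set (V ⊕ Unit)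
  | .inl v => if v ∈ i.val.1 then Sum.inl '' i.val.2 else {Sum.inr ()}
  | .inr _ => {Sum.inr ()}

/-- The canonical transition system `T(X)` for the recall case: states
`V ∪ {⟲}`, indistinguishability is equality, `v* = {v}`. -/
def CanonT (X : Set (Formula V)) (_hX : MaxConsistent X) (_hV : Nonempty V) :
    TransitionSystem V where
  S := V ⊕ Unit
  sim := ⟨Eq, eq_equivalence⟩
  star := fun v => Quotient.mk _ (Sum.inl v)
  I := CanonI X
  instNonempty := by
    obtain ⟨v⟩ := _hV
    have hv : ({v} : Set V).Nonempty := Set.singleton_nonempty v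
    have hder : ArmDeriv X (Formula.nav {v} {v} hv hv) := ArmDeriv.refl hv hv subset_rfl
    rcases _hX.2 (Formula.nav {v} {v} hv hv) with hmem | hneg
    · exact ⟨⟨({v}, {v}), hv, hv, hmem⟩⟩
    · exact absurd ⟨_, hder, ArmDeriv.hyp hneg⟩ _hX.1
  Δ := CanonΔ X
  Δ_nonempty := by
    rintro ⟨⟨A, B⟩, hA, hB, -⟩ w
    cases w with
    | inl v =>
      by_cases hv : v ∈ A
      · simpa [CanonΔ, hv] using hB.image (Sum.inl : V → V ⊕ Unit)
      · simp [CanonΔ, hv]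
    | inr u => simp [CanonΔ]

/-- The chain `G^s_0 ⊆ G^s_1 ⊆ …` of Definition 23: `G^s_0 = G` and
`G^s_{n+1} = G^s_n ∪ { hd(h) | h a history with Δ_{s⟦h⟧}(hd(h)) ⊆ G^s_n }`. -/
def Gset (X : Set (Formula V)) (hX : MaxConsistent X) (hV : Nonempty V)
    (s : RecallStrategy (CanonT X hX hV)) (G : Set V) : ℕ → Set (V ⊕ Unit)
  | 0 => Sum.inl '' G
  | n + 1 =>
      Gset X hX hV s G n ∪
        {v | ∃ h : History (CanonT X hX hV),
              h.hd = v ∧ (CanonT X hX hV).Δ (s.act h) h.hd ⊆ Gset X hX hV s G n}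

/-!
Soundness is proved by induction on derivations, for every transition system at once.
Tautologies hold because `Sat` is classical over its atoms. Reflexivity and augmentation
hold for any strategy, since a path starting in `A*` with `A ⊆ B` visits `B*` at time `0`.
For transitivity, run `s₁ ∘_B s₂`: as long as `B*` has not been visited the path is a
path under `s₁`, so it does reach `B*`; from the first such time on, the composite acts
as `s₂` on truncated histories, so the remaining tail is a path under `s₂` starting in
`B*`, and hence it reaches `C*`.
-/

namespace TransitionSystem

variable {T : TransitionSystem V} {A B C : Set V}

def RecallStrategy.const (i : T.I) : RecallStrategy T := ⟨fun _ => i, fun _ _ _ => rfl⟩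

theorem History.truncIdx_eq {h : History T} {m : ℕ} (hm : m ≤ h.n)
    (hmB : T.cls (h.w m) ∈ T.starSet B) (hmin : ∀ j < m, T.cls (h.w j) ∉ T.starSet B) :
    h.truncIdx B = m := by
  rw [History.truncIdx, Nat.find_eq_iff]
  exact ⟨Or.inr hmB, fun j hj => not_or.2 ⟨by omega, hmin j hj⟩⟩

theorem RecallStrategy.compB_act_of_forall_notMem (s1 s2 : RecallStrategy T) {h : History T}
    (hB : ∀ k ≤ h.n, T.cls (h.w k) ∉ T.starSet B) : (s1.compB s2 B).act h = s1.act h :=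
  if_pos hB

theorem RecallStrategy.compB_act_of_mem (s1 s2 : RecallStrategy T) {h : History T} {m : ℕ}
    (hm : m ≤ h.n) (hmB : T.cls (h.w m) ∈ T.starSet B) :
    (s1.compB s2 B).act h = s2.act (h.trunc B) :=
  if_neg fun hB => hB m hm hmB

theorem Path.trunc_w {π : Path T} (H : ∃ k, T.cls (π.w k) ∈ T.starSet B) (k : ℕ) :
    (π.trunc B).w k = π.w (Nat.find H + k) := by
  rw [Path.trunc, dif_pos H]

theorem Path.trunc_i {π : Path T} (H : ∃ k, T.cls (π.w k) ∈ T.starSet B) (k : ℕ) :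
    (π.trunc B).i k = π.i (Nat.find H + k) := by
  rw [Path.trunc, dif_pos H]

theorem Path.Valid.trunc {π : Path T} (hv : π.Valid) (H : ∃ k, T.cls (π.w k) ∈ T.starSet B) :
    (π.trunc B).Valid := fun k => by
  rw [Path.trunc_w H, Path.trunc_w H, Path.trunc_i H, ← add_assoc]
  exact hv _

theorem Path.trunc_prefixH_indist {π : Path T} (hv : π.Valid)
    (H : ∃ k, T.cls (π.w k) ∈ T.starSet B) (k : ℕ) :
    ((π.prefixH hv (Nat.find H + k)).trunc B).Indist ((π.trunc B).prefixH (hv.trunc H) k) := by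
  have hidx : (π.prefixH hv (Nat.find H + k)).truncIdx B = Nat.find H :=
    History.truncIdx_eq (Nat.le_add_right _ k) (Nat.find_spec H) fun j => Nat.find_min H
  refine ⟨?_, fun j _ => ?_, fun j _ => ?_⟩
  · change Nat.find H + k - _ = k
    omega
  · change π.i (_ + j) = (π.trunc B).i j
    rw [hidx, Path.trunc_i H]
  · change T.sim.r (π.w (_ + j)) ((π.trunc B).w j)
    rw [hidx, Path.trunc_w H]

theorem IsPathUnder.of_compB_of_forall_notMem {s1 s2 : RecallStrategy T} {π : Path T}
    (hπ : IsPathUnder (s1.compB s2 B) π) (hB : ∀ k, T.cls (π.w k) ∉ T.starSet B) :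
    IsPathUnder s1 π := by
  obtain ⟨hv, hact⟩ := hπ
  exact ⟨hv, fun k =>
    (hact k).trans (RecallStrategy.compB_act_of_forall_notMem s1 s2 fun j _ => hB j)⟩

theorem IsPathUnder.trunc_of_compB {s1 s2 : RecallStrategy T} {π : Path T}
    (hπ : IsPathUnder (s1.compB s2 B) π) (H : ∃ k, T.cls (π.w k) ∈ T.starSet B) :
    IsPathUnder s2 (π.trunc B) := by
  obtain ⟨hv, hact⟩ := hπ
  refine ⟨hv.trunc H, fun k => ?_⟩
  calc (π.trunc B).i k
      = (s1.compB s2 B).act (π.prefixH hv (Nat.find H + k)) := by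
        rw [Path.trunc_i H, hact]
    _ = s2.act ((π.prefixH hv (Nat.find H + k)).trunc B) :=
        RecallStrategy.compB_act_of_mem s1 s2 (Nat.le_add_right _ k) (Nat.find_spec H)
    _ = s2.act ((π.trunc B).prefixH (hv.trunc H) k) :=
        s2.respects _ _ (Path.trunc_prefixH_indist hv H k)

theorem visitSet_mono (s : RecallStrategy T) (hBC : B ⊆ C) : VisitSet s B ⊆ VisitSet s C :=
  fun _ ⟨hπ, k, hk⟩ => ⟨hπ, k, Set.image_mono hBC hk⟩

theorem pathSet_subset_visitSet (s : RecallStrategy T) (A : Set V) :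
    PathSet s A ⊆ VisitSet s A :=
  fun _ ⟨hπ, hA⟩ => ⟨hπ, 0, hA⟩

theorem pathSet_union (s : RecallStrategy T) (A C : Set V) :
    PathSet s (A ∪ C) = PathSet s A ∪ PathSet s C := by
  ext π
  simp only [PathSet, starSet, Set.image_union, Set.mem_union, Set.mem_ofPred_eq, and_or_left]

theorem pathSet_union_subset_visitSet_union {s : RecallStrategy T}
    (hs : PathSet s A ⊆ VisitSet s B) (C : Set V) :
    PathSet s (A ∪ C) ⊆ VisitSet s (B ∪ C) := by
  rw [pathSet_union]
  exact Set.union_subset (hs.trans (visitSet_mono s Set.subset_union_left))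
    ((pathSet_subset_visitSet s C).trans (visitSet_mono s Set.subset_union_right))

theorem pathSet_compB_subset_visitSet {s1 s2 : RecallStrategy T}
    (h1 : PathSet s1 A ⊆ VisitSet s1 B) (h2 : PathSet s2 B ⊆ VisitSet s2 C) :
    PathSet (s1.compB s2 B) A ⊆ VisitSet (s1.compB s2 B) C := by
  rintro π ⟨hπ, hA⟩
  have H : ∃ k, T.cls (π.w k) ∈ T.starSet B := by
    by_contra! hB
    obtain ⟨-, k, hk⟩ := h1 ⟨hπ.of_compB_of_forall_notMem hB, hA⟩
    exact hB k hk
  have h0 : T.cls ((π.trunc B).w 0) ∈ T.starSet B := by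
    simpa only [Path.trunc_w H, add_zero] using Nat.find_spec H
  obtain ⟨-, k, hk⟩ := h2 ⟨hπ.trunc_of_compB H, h0⟩
  rw [Path.trunc_w H] at hk
  exact ⟨hπ, _, hk⟩

end TransitionSystem

theorem sat_iff_evalWith (T : TransitionSystem V) (φ : Formula V) :
    Sat T φ ↔ φ.evalWith fun A B => ∃ s : RecallStrategy T, PathSet s A ⊆ VisitSet s B := by
  induction φ with
  | nav => rfl
  | neg φ ih => exact not_congr ih
  | imp φ ψ ihφ ihψ => exact imp_congr ihφ ihψ

theorem sat_of_armDeriv {T : TransitionSystem V} {X : Set (Formula V)}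
    (hX : ∀ ψ ∈ X, Sat T ψ) {φ : Formula V} (h : ArmDeriv X φ) : Sat T φ := by
  induction h with
  | hyp hψ => exact hX _ hψ
  | taut hφ => exact (sat_iff_evalWith T _).2 (hφ _)
  | @refl A _ _ _ hAB =>
    obtain ⟨i⟩ := T.instNonempty
    exact ⟨.const i, (pathSet_subset_visitSet _ A).trans (visitSet_mono _ hAB)⟩
  | aug => exact fun ⟨s, hs⟩ => ⟨s, pathSet_union_subset_visitSet_union hs _⟩
  | @trans _ B => exact fun ⟨s1, hs1⟩ ⟨s2, hs2⟩ =>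
      ⟨s1.compB s2 B, pathSet_compB_subset_visitSet hs1 hs2⟩
  | mp _ _ ihφψ ihφ => exact ihφψ ihφ

theorem recall_soundness_general (φ : Formula V)
    (h : ArmDeriv (∅ : Set (Formula V)) φ) :
    ∀ T : TransitionSystem V, Sat T φ :=
  fun _ => sat_of_armDeriv (fun ψ hψ => absurd hψ (Set.notMem_empty ψ)) h

/-- Soundness for recall strategies: if `⊢ φ` then `T ⊨ φ` for
every transition system `T` under the recall semantics. -/
theorem recall_soundness [Fintype V] (φ : Formula V)
    (h : ArmDeriv (∅ : Set (Formula V)) φ) :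
    ∀ T : TransitionSystem V, Sat T φ :=
  recall_soundness_general φ h
end
end Nav
end

section
/- Completeness for recall strategies: for every formula φ ∈ Φ, if T ⊨ φ for every transition system T under the recall semantics, then ⊢ φ (φ is derivable from propositional tautologies and Armstrong's axioms by Modus Ponens). -/
/-!
With `V` finite there are only finitely many instances of Armstrong's axioms, so `φ` is a
tautological consequence of them (hence derivable) as soon as it holds under every valuation `v`
of the atoms that validates them all. Such a `v` is realised by the canonical transition system on
`V` plus a black hole, whose instructions are the pairs `(A, B)` with `v A B`: the constant
strategy playing `(A, B)` reaches `B` from `A` in one step, and conversely the states `u` with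
`v {u} B` are closed under backward steps, so from any other state every strategy has a path
avoiding `B` forever.
-/

namespace Nav

noncomputable section

attribute [local instance] Classical.propDecidable

variable {V : Type}

open TransitionSystem

theorem Formula.views_nonempty (φ : Formula V) : Nonempty V := by
  induction φ with
  | nav _ _ hA _ => exact ⟨hA.some⟩
  | neg _ ih => exact ih
  | imp _ _ ih _ => exact ih

structure ArmClosed (v : Set V → Set V → Prop) : Prop where
  refl {A B : Set V} : A.Nonempty → B.Nonempty → A ⊆ B → v A B
  aug {A B C : Set V} : A.Nonempty → B.Nonempty → C.Nonempty → v A B → v (A ∪ C) (B ∪ C)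
  trans {A B C : Set V} : A.Nonempty → B.Nonempty → C.Nonempty → v A B → v B C → v A C

namespace ArmClosed

variable {v : Set V → Set V → Prop} (hv : ArmClosed v)
include hv

theorem union_left {A C B : Set V} (hA : A.Nonempty) (hC : C.Nonempty) (hB : B.Nonempty)
    (hAB : v A B) (hCB : v C B) : v (A ∪ C) B := by
  have hACBC : v (A ∪ C) (B ∪ C) := hv.aug hA hB hC hAB
  have hBCB : v (C ∪ B) (B ∪ B) := hv.aug hC hB hB hCB
  rw [Set.union_self, Set.union_comm] at hBCB
  exact hv.trans hA.inl hB.inl hB hACBC hBCB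

theorem of_forall_singleton {A B : Set V} (hfin : A.Finite) (hA : A.Nonempty)
    (hB : B.Nonempty) (h : ∀ a ∈ A, v {a} B) : v A B := by
  induction A, hfin using Set.Finite.induction_on with
  | empty => exact absurd hA Set.not_nonempty_empty
  | @insert a A _ _ ih =>
    have ha : v {a} B := h a (Set.mem_insert a A)
    rcases A.eq_empty_or_nonempty with rfl | hA'
    · simpa using ha
    · rw [Set.insert_eq]
      exact hv.union_left (Set.singleton_nonempty a) hA' hB ha
        (ih hA' fun b hb => h b (Set.mem_insert_of_mem a hb))

end ArmClosed

theorem ArmDeriv.evalWith {v : Set V → Set V → Prop} (hv : ArmClosed v) {X : Set (Formula V)}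
    (hX : ∀ ψ ∈ X, ψ.evalWith v) {φ : Formula V} (h : ArmDeriv X φ) : φ.evalWith v := by
  induction h with
  | hyp hφ => exact hX _ hφ
  | taut hφ => exact hφ v
  | refl hA hB hAB => exact hv.refl hA hB hAB
  | aug hA hB hC => exact hv.aug hA hB hC
  | trans hA hB hC => exact hv.trans hA hB hC
  | mp _ _ ihφψ ihφ => exact ihφψ ihφ

theorem ArmClosed.maxConsistent {v : Set V → Set V → Prop} (hv : ArmClosed v) :
    MaxConsistent {ψ : Formula V | ψ.evalWith v} := by
  refine ⟨?_, fun φ => em (φ.evalWith v)⟩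
  rintro ⟨φ, hφ, hnφ⟩
  exact (hnφ.evalWith hv fun _ => id) (hφ.evalWith hv fun _ => id)

inductive ArmAxiom (V : Type) : Type
  | refl {A B : Set V} (hA : A.Nonempty) (hB : B.Nonempty) (hAB : A ⊆ B)
  | aug {A B C : Set V} (hA : A.Nonempty) (hB : B.Nonempty) (hC : C.Nonempty)
  | trans {A B C : Set V} (hA : A.Nonempty) (hB : B.Nonempty) (hC : C.Nonempty)

namespace ArmAxiom

def formula : ArmAxiom V → Formula V
  | refl hA hB _ => .nav _ _ hA hB
  | aug (C := C) hA hB _ => .imp (.nav _ _ hA hB) (.nav (_ ∪ C) (_ ∪ C) hA.inl hB.inl)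
  | trans hA hB hC => .imp (.nav _ _ hA hB) (.imp (.nav _ _ hB hC) (.nav _ _ hA hC))

def encode : ArmAxiom V → Fin 3 × Set V × Set V × Set V
  | refl (A := A) (B := B) .. => (0, A, B, ∅)
  | aug (A := A) (B := B) (C := C) .. => (1, A, B, C)
  | trans (A := A) (B := B) (C := C) .. => (2, A, B, C)

theorem encode_injective : Function.Injective (encode (V := V)) := by
  rintro (_ | _ | _) (_ | _ | _) h <;> simp_all [encode]

instance [Finite V] : Finite (ArmAxiom V) := Finite.of_injective _ encode_injective

theorem armDeriv (X : Set (Formula V)) : ∀ a : ArmAxiom V, ArmDeriv X a.formula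
  | refl hA hB hAB => .refl hA hB hAB
  | aug hA hB hC => .aug hA hB hC
  | trans hA hB hC => .trans hA hB hC

end ArmAxiom

theorem ArmClosed.of_forall_armAxiom {v : Set V → Set V → Prop}
    (h : ∀ a : ArmAxiom V, a.formula.evalWith v) : ArmClosed v :=
  ⟨fun hA hB hAB => h (.refl hA hB hAB), fun hA hB hC => h (.aug hA hB hC),
    fun hA hB hC => h (.trans hA hB hC)⟩

theorem ArmDeriv.of_forall_evalWith {X : Set (Formula V)} {ι : Type*} [Finite ι]
    {γ : ι → Formula V} (hγ : ∀ i, ArmDeriv X (γ i)) {φ : Formula V}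
    (h : ∀ v, (∀ i, (γ i).evalWith v) → φ.evalWith v) : ArmDeriv X φ := by
  have : Fintype ι := Fintype.ofFinite ι
  suffices ∀ (s : Finset ι) (φ : Formula V),
      (∀ v, (∀ i ∈ s, (γ i).evalWith v) → φ.evalWith v) → ArmDeriv X φ from
    this Finset.univ φ fun v hv => h v fun i => hv i (Finset.mem_univ i)
  intro s
  induction s using Finset.induction_on with
  | empty => exact fun φ hφ => .taut fun v => hφ v fun _ hi => absurd hi (Finset.notMem_empty _)
  | insert i s _ ih =>
    intro φ hφ
    refine .mp (ih (.imp (γ i) φ) fun v hv hi => hφ v fun j hj => ?_) (hγ i)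
    rcases Finset.mem_insert.mp hj with rfl | hj
    exacts [hi, hv j hj]

theorem ArmDeriv.of_forall_armClosed [Finite V] {X : Set (Formula V)} {φ : Formula V}
    (h : ∀ v, ArmClosed v → φ.evalWith v) : ArmDeriv X φ :=
  .of_forall_evalWith (ArmAxiom.armDeriv X) fun v hv => h v (ArmClosed.of_forall_armAxiom hv)

namespace TransitionSystem

variable {T : TransitionSystem V}

def History.snoc (h : History T) (i : T.I) (w : T.S) (hw : w ∈ T.Δ i h.hd) : History T where
  n := h.n + 1
  w j := if j ≤ h.n then h.w j else w
  i j := if j < h.n then h.i j else i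
  valid k hk := by
    rcases Nat.lt_or_eq_of_le (Nat.le_of_lt_succ hk) with hk | rfl
    · simpa [hk, hk.le, Nat.succ_le_of_lt hk] using h.valid k hk
    · simpa [History.hd] using hw

namespace History

variable (h : History T) (i : T.I) (w : T.S) (hw : w ∈ T.Δ i h.hd)

@[simp] theorem snoc_n : (h.snoc i w hw).n = h.n + 1 := rfl

@[simp] theorem snoc_hd : (h.snoc i w hw).hd = w := by simp [snoc, hd]

theorem snoc_w_of_le {j : ℕ} (hj : j ≤ h.n) : (h.snoc i w hw).w j = h.w j := if_pos hj

theorem snoc_i_of_lt {j : ℕ} (hj : j < h.n) : (h.snoc i w hw).i j = h.i j := if_pos hj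

theorem snoc_i_self : (h.snoc i w hw).i h.n = i := if_neg (lt_irrefl _)

end History

namespace RecallStrategy

variable (s : RecallStrategy T)

theorem isPathUnder_of_forall_snoc {H : ℕ → History T} (h0 : (H 0).n = 0)
    (hsucc : ∀ k, ∃ w hw, H (k + 1) = (H k).snoc (s.act (H k)) w hw) :
    IsPathUnder s ⟨fun k => (H k).hd, fun k => s.act (H k)⟩ := by
  choose w hw hH using hsucc
  have hn : ∀ k, (H k).n = k := fun k => by
    induction k with
    | zero => exact h0
    | succ k ih => rw [hH, History.snoc_n, ih]
  have hw_eq : ∀ k, ∀ j ≤ k, (H k).w j = (H j).hd := fun k => by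
    induction k with
    | zero => intro j hj; rw [Nat.le_zero.mp hj, History.hd, h0]
    | succ k ih =>
      intro j hj
      rcases Nat.lt_or_eq_of_le hj with hj | rfl
      · rw [hH, History.snoc_w_of_le _ _ _ _ (by rw [hn]; omega), ih j (by omega)]
      · rw [History.hd, hn]
  have hi_eq : ∀ k, ∀ j < k, (H k).i j = s.act (H j) := fun k => by
    induction k with
    | zero => intro j hj; omega
    | succ k ih =>
      intro j hj
      rcases Nat.lt_or_eq_of_le (Nat.le_of_lt_succ hj) with hj | rfl
      · rw [hH, History.snoc_i_of_lt _ _ _ _ (by rw [hn]; omega), ih j hj]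
      · have hlast := History.snoc_i_self (H j) (s.act (H j)) (w j) (hw j)
        rwa [hn, ← hH] at hlast
  have hvalid : Path.Valid ⟨fun k => (H k).hd, fun k => s.act (H k)⟩ := fun k => by
    simpa [hH k] using hw k
  refine ⟨hvalid, fun k => s.respects _ _ ⟨hn k, fun j hj => hi_eq k j (hn k ▸ hj),
    fun j hj => ?_⟩⟩
  simp only [Path.prefixH, hw_eq k j (hn k ▸ hj)]
  exact T.sim.iseqv.refl _

theorem exists_isPathUnder_forall_notMem {W : Set T.S}
    (hW : ∀ h : History T, h.hd ∉ W → ∃ w ∈ T.Δ (s.act h) h.hd, w ∉ W)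
    {w₀ : T.S} (hw₀ : w₀ ∉ W) :
    ∃ π : Path T, IsPathUnder s π ∧ π.w 0 = w₀ ∧ ∀ k, π.w k ∉ W := by
  choose next hnext hnextW using hW
  let step : {h : History T // h.hd ∉ W} → {h : History T // h.hd ∉ W} := fun h =>
    ⟨h.1.snoc (s.act h.1) (next h.1 h.2) (hnext h.1 h.2), by simpa using hnextW h.1 h.2⟩
  obtain ⟨i₀⟩ := T.instNonempty
  let h₀ : {h : History T // h.hd ∉ W} := ⟨⟨0, fun _ => w₀, fun _ => i₀, by simp⟩, hw₀⟩
  let H : ℕ → History T := fun k => (step^[k] h₀).1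
  have hsucc : ∀ k, ∃ w hw, H (k + 1) = (H k).snoc (s.act (H k)) w hw := fun k =>
    ⟨_, hnext _ (step^[k] h₀).2, congrArg Subtype.val (Function.iterate_succ_apply' step k h₀)⟩
  exact ⟨_, s.isPathUnder_of_forall_snoc rfl hsucc, rfl, fun k => (step^[k] h₀).2⟩

end RecallStrategy

end TransitionSystem

theorem canonT_cls_mem_starSet {X : Set (Formula V)} {hX : MaxConsistent X} {hV : Nonempty V}
    {w : V ⊕ Unit} {B : Set V} :
    (CanonT X hX hV).cls w ∈ (CanonT X hX hV).starSet B ↔ w ∈ Sum.inl '' B :=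
  ⟨fun ⟨b, hb, hbw⟩ => ⟨b, hb, Quotient.exact hbw⟩, fun ⟨b, hb, hbw⟩ => ⟨b, hb, hbw ▸ rfl⟩⟩

theorem canonΔ_inl_of_mem {X : Set (Formula V)} {i : CanonI X} {u : V} (hu : u ∈ i.val.1) :
    CanonΔ X i (.inl u) = Sum.inl '' i.val.2 := if_pos hu

namespace ArmClosed

variable {v : Set V → Set V → Prop} (hv : ArmClosed v)

abbrev canonT (hV : Nonempty V) : TransitionSystem V :=
  CanonT {ψ : Formula V | ψ.evalWith v} hv.maxConsistent hV

include hv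

/-- A move `(C, D)` from `u ∈ C` lands in `D`, and `{u} ▷ C ▷ D ▷ B` chains by transitivity;
every other move falls into the black hole. -/
theorem mem_of_canonΔ_subset [Finite V] {B : Set V} (hB : B.Nonempty)
    (i : CanonI {ψ : Formula V | ψ.evalWith v}) (w : V ⊕ Unit)
    (hi : CanonΔ _ i w ⊆ Sum.inl '' {u | v {u} B}) : w ∈ Sum.inl '' {u | v {u} B} := by
  obtain ⟨hC, hD, hCD⟩ := i.2
  have hinr : Sum.inr () ∉ Sum.inl '' {u | v {u} B} := by simp
  rcases w with u | ⟨⟩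
  · by_cases hu : u ∈ i.1.1
    · rw [canonΔ_inl_of_mem hu, Set.image_subset_image_iff Sum.inl_injective] at hi
      have hDB : v i.1.2 B := hv.of_forall_singleton (Set.toFinite _) hD hB hi
      have huC : v {u} i.1.1 :=
        hv.refl (Set.singleton_nonempty u) hC (Set.singleton_subset_iff.2 hu)
      have huD : v {u} i.1.2 := hv.trans (Set.singleton_nonempty u) hC hD huC hCD
      exact ⟨u, hv.trans (Set.singleton_nonempty u) hD hB huD hDB, rfl⟩
    · exact absurd (hi (by simp [CanonΔ, hu])) hinr
  · exact absurd (hi (by simp [CanonΔ])) hinr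

theorem exists_sat_nav_canonT (hV : Nonempty V) {A B : Set V} (hA : A.Nonempty)
    (hB : B.Nonempty) (hAB : v A B) :
    ∃ s : RecallStrategy (hv.canonT hV), PathSet s A ⊆ VisitSet s B := by
  let i : CanonI {ψ : Formula V | ψ.evalWith v} := ⟨(A, B), hA, hB, hAB⟩
  refine ⟨⟨fun _ => i, fun _ _ _ => rfl⟩, ?_⟩
  rintro π ⟨hπ, hπA⟩
  refine ⟨hπ, 1, ?_⟩
  obtain ⟨hvalid, hact⟩ := hπ
  obtain ⟨a, ha, hπ0⟩ := canonT_cls_mem_starSet.1 hπA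
  have hπ1 : π.w 1 ∈ CanonΔ _ i (.inl a) := by
    have h01 := hvalid 0
    rw [hact 0, ← hπ0] at h01
    exact h01
  exact canonT_cls_mem_starSet.2 (by rwa [canonΔ_inl_of_mem ha] at hπ1)

theorem of_sat_nav_canonT [Finite V] (hV : Nonempty V) {A B : Set V} (hA : A.Nonempty)
    (hB : B.Nonempty) (s : RecallStrategy (hv.canonT hV)) (hs : PathSet s A ⊆ VisitSet s B) :
    v A B := by
  refine hv.of_forall_singleton (Set.toFinite A) hA hB fun a ha => ?_
  by_contra hnot
  have hW : ∀ h : History (hv.canonT hV), h.hd ∉ Sum.inl '' {u | v {u} B} →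
      ∃ w ∈ CanonΔ _ (s.act h) h.hd, w ∉ Sum.inl '' {u | v {u} B} := fun h hh => by
    by_contra! hsub
    exact hh (hv.mem_of_canonΔ_subset hB _ _ hsub)
  obtain ⟨π, hπ, hπ0, hπW⟩ := s.exists_isPathUnder_forall_notMem hW (w₀ := .inl a)
    fun ⟨u, hu, hua⟩ => hnot (Sum.inl_injective hua ▸ hu)
  obtain ⟨-, k, hk⟩ := hs ⟨hπ, canonT_cls_mem_starSet.2 ⟨a, ha, hπ0.symm⟩⟩
  obtain ⟨b, hb, hbk⟩ := canonT_cls_mem_starSet.1 hk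
  exact hπW k ⟨b, hv.refl (Set.singleton_nonempty b) hB (Set.singleton_subset_iff.2 hb), hbk⟩

theorem sat_canonT_iff [Finite V] (hV : Nonempty V) (φ : Formula V) :
    Sat (hv.canonT hV) φ ↔ φ.evalWith v := by
  induction φ with
  | nav A B hA hB =>
    exact ⟨fun ⟨s, hs⟩ => hv.of_sat_nav_canonT hV hA hB s hs, hv.exists_sat_nav_canonT hV hA hB⟩
  | neg φ ih => exact not_congr ih
  | imp φ ψ ihφ ihψ => exact imp_congr ihφ ihψ

end ArmClosed

/-- Completeness for recall strategies: if `T ⊨ φ` for every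
transition system `T` under the recall semantics, then `⊢ φ`. -/
theorem recall_completeness [Fintype V] (φ : Formula V)
    (h : ∀ T : TransitionSystem V, Sat T φ) :
    ArmDeriv (∅ : Set (Formula V)) φ :=
  .of_forall_armClosed fun _ hv => (hv.sat_canonT_iff φ.views_nonempty φ).1 (h _)
end
end Nav
end

section
/- Completeness for memoryless strategies: for every formula φ ∈ Φ, if T ⊨ φ for every transition system T under the memoryless semantics, then φ is derivable in the memoryless proof system. -/
/-!
A valuation `u` of the atoms `A ▷ B` that satisfies the instances of Reflexivity, Augmentation
and Monotonicity (finitely many, as `V` is finite) is realised by a transition system. Its states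
are the views, one intermediate state for each pair `(A, B)` with `u A B`, and a black hole; the
instruction `(A, B)` moves a view of `A` to the intermediate state `(A, B)` and every other view
to the black hole, and it moves the intermediate state `(A, B)` into `B`. Only views are
observable, so a memoryless strategy plays one instruction `(C, D)` on all other states. If
`u A B` fails, then `A ⊄ B`, and `A ⊆ B ∪ C`, `D ⊆ B` cannot both hold, since Augmentation and
Monotonicity would derive `u A B` from `u C D`. So either a view of `A` outside `B ∪ C` only
leads to the black hole, or a path from a view of `A \ B` can keep cycling through a view of
`D \ B`; in both cases some path never visits `B`. Hence a formula valid in every system holds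
under every such valuation, i.e. it follows propositionally from the axiom instances.
-/

namespace Nav

noncomputable section

attribute [local instance] Classical.propDecidable

variable {V : Type}

open TransitionSystem

namespace TransitionSystem

variable {T : TransitionSystem V}

theorem exists_isPathUnderM_forall_mem (s : Quotient T.sim → T.I) {G : Set T.S}
    (hG : ∀ w ∈ G, ∃ w' ∈ T.Δ (s (T.cls w)) w, w' ∈ G) {w₀ : T.S} (h₀ : w₀ ∈ G) :
    ∃ π : Path T, IsPathUnderM s π ∧ π.w 0 = w₀ ∧ ∀ k, π.w k ∈ G := by
  choose next hnext hnextG using hG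
  let succ : G → G := fun w => ⟨next w w.2, hnextG w w.2⟩
  let W : ℕ → G := fun k => succ^[k] ⟨w₀, h₀⟩
  refine ⟨⟨fun k => W k, fun k => s (T.cls (W k))⟩, ⟨fun k => ?_, fun _ => rfl⟩, rfl,
    fun k => (W k).2⟩
  show ((W (k + 1) : G) : T.S) ∈ T.Δ (s (T.cls (W k))) (W k)
  rw [show W (k + 1) = succ (W k) from Function.iterate_succ_apply' succ k _]
  exact hnext _ _

theorem not_pathSetM_subset_visitSetM_of_invariant (s : Quotient T.sim → T.I) {A B : Set V}
    {G : Set T.S} (hG : ∀ w ∈ G, ∃ w' ∈ T.Δ (s (T.cls w)) w, w' ∈ G)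
    (hGB : ∀ w ∈ G, T.cls w ∉ T.starSet B) {w₀ : T.S} (h₀ : w₀ ∈ G)
    (hA : T.cls w₀ ∈ T.starSet A) :
    ¬ PathSetM s A ⊆ VisitSetM s B := by
  intro hs
  obtain ⟨π, hπ, hπ0, hπG⟩ := exists_isPathUnderM_forall_mem s hG h₀
  obtain ⟨-, k, hk⟩ := hs ⟨hπ, hπ0 ▸ hA⟩
  exact hGB _ (hπG k) hk

end TransitionSystem

theorem satM_iff_evalWith {T : TransitionSystem V} {u : Set V → Set V → Prop}
    (h : ∀ A B (hA : A.Nonempty) (hB : B.Nonempty), SatM T (.nav A B hA hB) ↔ u A B) :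
    ∀ φ : Formula V, SatM T φ ↔ φ.evalWith u
  | .nav A B hA hB => h A B hA hB
  | .neg φ => not_congr (satM_iff_evalWith h φ)
  | .imp φ ψ => imp_congr (satM_iff_evalWith h φ) (satM_iff_evalWith h ψ)

theorem Formula.nonempty_views : Formula V → Nonempty V
  | .nav _ _ hA _ => hA.to_subtype.map Subtype.val
  | .neg φ => φ.nonempty_views
  | .imp φ _ => φ.nonempty_views

inductive IsMemAxiom : Formula V → Prop
  | refl {A B : Set V} (hA : A.Nonempty) (hB : B.Nonempty) :
      A ⊆ B → IsMemAxiom (.nav A B hA hB)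
  | aug {A B C : Set V} (hA : A.Nonempty) (hB : B.Nonempty) (hC : C.Nonempty) :
      IsMemAxiom (.imp (.nav A B hA hB) (.nav (A ∪ C) (B ∪ C) hA.inl hB.inl))
  | mono {A A' B : Set V} (hA : A.Nonempty) (hA' : A'.Nonempty) (hB : B.Nonempty) :
      A ⊆ A' → IsMemAxiom (.imp (.nav A' B hA' hB) (.nav A B hA hB))

theorem IsMemAxiom.memDeriv {X : Set (Formula V)} {φ : Formula V} :
    IsMemAxiom φ → MemDeriv X φ
  | .refl hA hB h => .refl hA hB h
  | .aug hA hB hC => .aug hA hB hC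
  | .mono hA hA' hB h => .mono hA hA' hB h

theorem finite_setOf_isMemAxiom [Finite V] : {φ : Formula V | IsMemAxiom φ}.Finite := by
  let atoms : Set (Formula V) :=
    Set.range fun t : {t : Set V × Set V // t.1.Nonempty ∧ t.2.Nonempty} =>
      .nav t.1.1 t.1.2 t.2.1 t.2.2
  have mem_atoms {A B : Set V} (hA : A.Nonempty) (hB : B.Nonempty) : .nav A B hA hB ∈ atoms :=
    ⟨⟨(A, B), hA, hB⟩, rfl⟩
  have hatoms : atoms.Finite := Set.finite_range _
  refine (hatoms.union (hatoms.image2 Formula.imp hatoms)).subset ?_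
  rintro _ (⟨hA, hB, -⟩ | ⟨hA, hB, hC⟩ | ⟨hA, hA', hB, -⟩)
  · exact .inl (mem_atoms hA hB)
  · exact .inr ⟨_, mem_atoms hA hB, _, mem_atoms hA.inl hB.inl, rfl⟩
  · exact .inr ⟨_, mem_atoms hA' hB, _, mem_atoms hA hB, rfl⟩

theorem memDeriv_of_forall_evalWith {X Γ : Set (Formula V)} (hΓ : Γ.Finite)
    (hder : ∀ ψ ∈ Γ, MemDeriv X ψ) {φ : Formula V}
    (hφ : ∀ u, (∀ ψ ∈ Γ, ψ.evalWith u) → φ.evalWith u) : MemDeriv X φ := by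
  induction Γ, hΓ using Set.Finite.induction_on generalizing φ with
  | empty => exact .taut fun u => hφ u (by simp)
  | @insert ψ Γ _ _ ih =>
    refine .mp (ih (fun χ hχ => hder χ (.inr hχ)) (φ := .imp ψ φ) fun u hu hψ => hφ u ?_)
      (hder ψ (.inl rfl))
    rintro χ (rfl | hχ)
    exacts [hψ, hu χ hχ]

def RespectsMemAxioms (u : Set V → Set V → Prop) : Prop :=
  ∀ φ : Formula V, IsMemAxiom φ → φ.evalWith u

theorem RespectsMemAxioms.of_subset_union {u : Set V → Set V → Prop} (hu : RespectsMemAxioms u)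
    {A B C D : Set V} (hA : A.Nonempty) (hB : B.Nonempty) (hC : C.Nonempty) (hD : D.Nonempty)
    (hCD : u C D) (hABC : A ⊆ B ∪ C) (hDB : D ⊆ B) : u A B := by
  have hCB : u (C ∪ B) (D ∪ B) := hu _ (.aug hC hD hB) hCD
  rw [Set.union_eq_self_of_subset_left hDB] at hCB
  exact hu _ (.mono hA hC.inl hB (by rwa [Set.union_comm])) hCB

namespace MemModel

def Instr (u : Set V → Set V → Prop) : Type :=
  {p : Set V × Set V // p.1.Nonempty ∧ p.2.Nonempty ∧ u p.1 p.2}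

abbrev State (u : Set V → Set V → Prop) : Type := V ⊕ Option (Instr u)

variable {u : Set V → Set V → Prop}

def step (p : Instr u) : State u → Set (State u)
  | .inl a => {.inr (if a ∈ p.1.1 then some p else none)}
  | .inr (some q) => if p = q then .inl '' p.1.2 else {.inr none}
  | .inr none => {.inr none}

theorem inr_none_mem_step {p : Instr u} {x : Option (Instr u)} (hx : x ≠ some p) :
    .inr none ∈ step p (.inr x) := by
  rcases x with _ | q
  · simp [step]
  · rw [step, if_neg fun h : p = q => hx (h ▸ rfl)]
    rfl

end MemModel

/- Reducible, so that `rw` and `simp` see `(memModel u hu hV).S` as `State u`. -/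
open MemModel in
abbrev memModel (u : Set V → Set V → Prop) (hu : RespectsMemAxioms u) (hV : Nonempty V) :
    TransitionSystem V where
  S := State u
  sim := Setoid.ker Sum.getLeft?
  star a := Quotient.mk _ (.inl a)
  I := Instr u
  instNonempty :=
    let ⟨x⟩ := hV
    have hx : ({x} : Set V).Nonempty := Set.singleton_nonempty x
    ⟨⟨({x}, {x}), hx, hx, hu _ (.refl hx hx subset_rfl)⟩⟩
  Δ := step
  Δ_nonempty p w := by
    rcases w with _ | _ | q
    · exact Set.singleton_nonempty _
    · simp [step]
    · by_cases hpq : p = q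
      · simpa [step, hpq] using q.2.2.1
      · simp [step, hpq]

namespace MemModel

variable {u : Set V → Set V → Prop} {hu : RespectsMemAxioms u} {hV : Nonempty V}

theorem cls_mem_starSet {A : Set V} {w : State u} :
    (memModel u hu hV).cls w ∈ (memModel u hu hV).starSet A ↔ ∃ a ∈ A, w = .inl a := by
  refine exists_congr fun a => and_congr_right fun _ => ?_
  change Quotient.mk (Setoid.ker Sum.getLeft?) _ = Quotient.mk _ w ↔ _
  rw [Quotient.eq, Setoid.ker_def, eq_comm]
  exact Sum.getLeft?_eq_some_iff

theorem satM_nav_of_rel {A B : Set V} (hA : A.Nonempty) (hB : B.Nonempty) (hAB : u A B) :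
    SatM (memModel u hu hV) (.nav A B hA hB) := by
  let p : Instr u := ⟨(A, B), hA, hB, hAB⟩
  refine ⟨fun _ => p, ?_⟩
  rintro π ⟨hπ, h0⟩
  refine ⟨hπ, ?_⟩
  obtain ⟨a, haA, hw0⟩ := cls_mem_starSet.mp h0
  have hp (k : ℕ) : π.i k = p := hπ.2 k
  by_cases haB : a ∈ B
  · exact ⟨0, cls_mem_starSet.mpr ⟨a, haB, hw0⟩⟩
  have hw1 : π.w 1 ∈ step p (.inl a) := hw0 ▸ hp 0 ▸ hπ.1 0
  rw [step, if_pos haA, Set.mem_singleton_iff] at hw1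
  have hw2 : π.w 2 ∈ step p (.inr (some p)) := hw1 ▸ hp 1 ▸ hπ.1 1
  rw [step, if_pos rfl] at hw2
  obtain ⟨b, hbB, hw2⟩ := hw2
  exact ⟨2, cls_mem_starSet.mpr ⟨b, hbB, hw2.symm⟩⟩

theorem not_pathSetM_subset_visitSetM_of_subset (s : Quotient (memModel u hu hV).sim → Instr u)
    {p : Instr u} (hp : ∀ x, s ((memModel u hu hV).cls (.inr x)) = p) {A B : Set V} {a₀ : V}
    (haA : a₀ ∈ A) (haB : a₀ ∉ B ∪ p.1.1) : ¬ PathSetM s A ⊆ VisitSetM s B := by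
  refine not_pathSetM_subset_visitSetM_of_invariant s
    (G := {w | w = .inl a₀ ∨ ∃ x, w = .inr x ∧ x ≠ some p}) ?_ ?_ (.inl rfl)
    (cls_mem_starSet.mpr ⟨a₀, haA, rfl⟩)
  · rintro _ (rfl | ⟨x, rfl, hx⟩)
    · refine ⟨_, Set.mem_singleton _, .inr ⟨_, rfl, ?_⟩⟩
      split_ifs with hq
      · intro hqp
        exact haB (.inr (Option.some_inj.mp hqp ▸ hq))
      · simp
    · exact ⟨.inr none, hp x ▸ inr_none_mem_step hx, .inr ⟨none, rfl, by simp⟩⟩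
  · rintro _ (rfl | ⟨x, rfl, -⟩) hw <;> obtain ⟨a, ha, he⟩ := cls_mem_starSet.mp hw
    · cases he
      exact haB (.inl ha)
    · cases he

theorem not_pathSetM_subset_visitSetM_of_not_subset
    (s : Quotient (memModel u hu hV).sim → Instr u)
    {p : Instr u} (hp : ∀ x, s ((memModel u hu hV).cls (.inr x)) = p) {A B : Set V} {a₀ d : V}
    (haA : a₀ ∈ A) (haB : a₀ ∉ B) (hdp : d ∈ p.1.2) (hdB : d ∉ B) :
    ¬ PathSetM s A ⊆ VisitSetM s B := by
  refine not_pathSetM_subset_visitSetM_of_invariant s (G := {w | ∀ a, w = .inl a → a ∉ B})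
    ?_ ?_ (by simpa) (cls_mem_starSet.mpr ⟨a₀, haA, rfl⟩)
  · rintro (a | x) -
    · exact ⟨_, Set.mem_singleton _, by simp⟩
    · by_cases hx : x = some p
      · subst hx
        refine ⟨.inl d, ?_, by simpa⟩
        rw [hp]
        show Sum.inl d ∈ step p (.inr (some p))
        rw [step, if_pos rfl]
        exact ⟨d, hdp, rfl⟩
      · exact ⟨.inr none, hp x ▸ inr_none_mem_step hx, by simp⟩
  · intro w hw hwB
    obtain ⟨b, hb, rfl⟩ := cls_mem_starSet.mp hwB
    exact hw b rfl hb

theorem rel_of_satM_nav {A B : Set V} (hA : A.Nonempty) (hB : B.Nonempty)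
    (h : SatM (memModel u hu hV) (.nav A B hA hB)) : u A B := by
  obtain ⟨s, hs⟩ := h
  by_contra hAB
  obtain ⟨p, hp⟩ : ∃ p, ∀ x, s ((memModel u hu hV).cls (.inr x)) = p :=
    ⟨s ((memModel u hu hV).cls (.inr none)), fun _ => congrArg s (Quotient.sound rfl)⟩
  by_cases hpB : p.1.2 ⊆ B
  · obtain ⟨a₀, haA, haB⟩ := Set.not_subset.mp fun h =>
      hAB (hu.of_subset_union hA hB p.2.1 p.2.2.1 p.2.2.2 h hpB)
    exact not_pathSetM_subset_visitSetM_of_subset s hp haA haB hs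
  · obtain ⟨d, hdp, hdB⟩ := Set.not_subset.mp hpB
    obtain ⟨a₀, haA, haB⟩ := Set.not_subset.mp fun h => hAB (hu _ (.refl hA hB h))
    exact not_pathSetM_subset_visitSetM_of_not_subset s hp haA haB hdp hdB hs

theorem satM_nav_iff {A B : Set V} (hA : A.Nonempty) (hB : B.Nonempty) :
    SatM (memModel u hu hV) (.nav A B hA hB) ↔ u A B :=
  ⟨rel_of_satM_nav hA hB, satM_nav_of_rel hA hB⟩

end MemModel

/-- Completeness for memoryless strategies. -/
theorem memoryless_completeness [Fintype V] (φ : Formula V)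
    (h : ∀ T : TransitionSystem V, SatM T φ) :
    MemDeriv (∅ : Set (Formula V)) φ := by
  have hV : Nonempty V := φ.nonempty_views
  refine memDeriv_of_forall_evalWith finite_setOf_isMemAxiom (fun ψ hψ => hψ.memDeriv)
    fun u hu => ?_
  exact (satM_iff_evalWith (fun _ _ => MemModel.satM_nav_iff) φ).mp (h (memModel u hu hV))

end
end Nav
end

section
/- For any recall strategies s1, s2 of a transition system T and any sets A, B ⊆ V, if Path_{s1}(A) ⊆ Visit(B), then Path_{s1∘_B s2}(A) ⊆ Visit(B). -/
namespace Nav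

noncomputable section

attribute [local instance] Classical.propDecidable

variable {V : Type}

open TransitionSystem

namespace TransitionSystem

variable {T : TransitionSystem V}

theorem RecallStrategy.compB_act_of_forall_not_mem (s1 s2 : RecallStrategy T) {B : Set V}
    {h : History T} (hB : ∀ k ≤ h.n, T.cls (h.w k) ∉ T.starSet B) :
    (s1.compB s2 B).act h = s1.act h :=
  if_pos hB

theorem isPathUnder_compB_iff_of_forall_not_mem (s1 s2 : RecallStrategy T) {B : Set V}
    {π : Path T} (hB : ∀ k, T.cls (π.w k) ∉ T.starSet B) :
    IsPathUnder (s1.compB s2 B) π ↔ IsPathUnder s1 π :=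
  exists_congr fun hv => forall_congr' fun k => by
    rw [s1.compB_act_of_forall_not_mem s2 fun j _ => hB j]

end TransitionSystem

theorem comp_preserves_visit_general (T : TransitionSystem V)
    (s1 s2 : RecallStrategy T) (A B : Set V)
    (h : PathSet s1 A ⊆ VisitSet s1 B) :
    PathSet (s1.compB s2 B) A ⊆ VisitSet (s1.compB s2 B) B := by
  rintro π ⟨hπ, hA⟩
  refine ⟨hπ, ?_⟩
  by_contra hvisit
  have hB : ∀ k, T.cls (π.w k) ∉ T.starSet B := fun k hk => hvisit ⟨k, hk⟩
  obtain ⟨-, k, hk⟩ := h ⟨(isPathUnder_compB_iff_of_forall_not_mem s1 s2 hB).1 hπ, hA⟩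
  exact hB k hk

/-- If `Path_{s1}(A) ⊆ Visit(B)` then `Path_{s1∘_B s2}(A) ⊆ Visit(B)`. -/
theorem comp_preserves_visit [Fintype V] (T : TransitionSystem V)
    (s1 s2 : RecallStrategy T) (A B : Set V)
    (h : PathSet s1 A ⊆ VisitSet s1 B) :
    PathSet (s1.compB s2 B) A ⊆ VisitSet (s1.compB s2 B) B :=
  comp_preserves_visit_general T s1 s2 A B h
end
end Nav
end

section
/- In the canonical transition system T(X), the black-hole state ⟲ does not belong to G^s_n for any recall strategy s, any nonempty G ⊆ V, and any n ≥ 0. -/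
namespace Nav

noncomputable section

attribute [local instance] Classical.propDecidable

variable {V : Type}

open TransitionSystem

theorem inr_mem_canonΔ_inr (X : Set (Formula V)) (i : CanonI X) (u : Unit) :
    Sum.inr u ∈ CanonΔ X i (Sum.inr u) :=
  rfl

/-- A state with a self-loop under every instruction can only enter `G^s_{n+1}` through a
history ending in it, and then it already lies in `G^s_n`. -/
theorem not_mem_Gset_of_self_mem_Δ {X : Set (Formula V)} {hX : MaxConsistent X}
    {hV : Nonempty V} (s : RecallStrategy (CanonT X hX hV)) (G : Set V) {w : V ⊕ Unit}
    (hloop : ∀ i, w ∈ (CanonT X hX hV).Δ i w) (h₀ : w ∉ Gset X hX hV s G 0) :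
    ∀ n, w ∉ Gset X hX hV s G n
  | 0 => h₀
  | n + 1 => by
    rintro (hmem | ⟨h, rfl, hsub⟩)
    · exact not_mem_Gset_of_self_mem_Δ s G hloop h₀ n hmem
    · exact not_mem_Gset_of_self_mem_Δ s G hloop h₀ n (hsub (hloop _))

theorem black_hole_not_in_Gset_general (hV : Nonempty V)
    (X : Set (Formula V)) (hX : MaxConsistent X)
    (s : RecallStrategy (CanonT X hX hV)) (G : Set V) (n : ℕ) :
    Sum.inr () ∉ Gset X hX hV s G n :=
  not_mem_Gset_of_self_mem_Δ s G (inr_mem_canonΔ_inr X · ()) (by simp [Gset]) n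

/-- In the canonical system `T(X)` the black hole `⟲` never
belongs to `G^s_n`. -/
theorem black_hole_not_in_Gset [Fintype V] (hV : Nonempty V)
    (X : Set (Formula V)) (hX : MaxConsistent X)
    (s : RecallStrategy (CanonT X hX hV)) (G : Set V) (hG : G.Nonempty) (n : ℕ) :
    Sum.inr () ∉ Gset X hX hV s G n :=
  black_hole_not_in_Gset_general hV X hX s G n
end
end Nav
end
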